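/- arXiv:2307.16771 — 4 statements merged into one kernel-verified Lean document; each statement's English description precedes it below -/
import Mathlib

section
/- If ρ̂ is a prediction that is d-delayed with k outliers for a set S of request sequences of length T, then for every ρ ∈ S and every t ∈ [T], the symmetric difference (as multisets) between the first t requests of ρ and the first t requests of ρ̂ has size at most 4k + 2d. -/
/-- The multiset of the first `t` requests of a sequence `ρ : Fin T → A`. -/
def prefixMultiset {T : ℕ} {A : Type*} (ρ : Fin T → A) (t : ℕ) : Multiset A :=
  (Finset.univ.filter (fun i : Fin T => (i : ℕ) < t)).val.map ρ

/-- A prediction `ρ̂` is `d`-delayed with `k` outliers for `S ⊆ (X∪Q)^T` if for every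
`ρ ∈ S` there are index sets `I, Î ⊆ [T]`, both of the same size `T' ≥ T − k`, and a
permutation `π` of `[T']` that is `d`-close to the identity, such that the reordering
by `π` of the subsequence `ρ_I` equals the subsequence `ρ̂_Î`. -/
def DDelayedKOutliers {T : ℕ} {A : Type*} (d k : ℕ) (ρhat : Fin T → A)
    (S : Set (Fin T → A)) : Prop :=
  ∀ ρ ∈ S, ∃ T' : ℕ, T - k ≤ T' ∧
    ∃ (I Ihat : Finset (Fin T)) (hI : I.card = T') (hIhat : Ihat.card = T')
      (π : Equiv.Perm (Fin T')),
      (∀ t : Fin T', |((π.symm t : ℕ) : ℤ) - ((t : ℕ) : ℤ)| ≤ (d : ℤ)) ∧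
      (∀ i : Fin T', ρ ((I.orderIsoOfFin hI (π i) : Fin T)) =
        ρhat ((Ihat.orderIsoOfFin hIhat i : Fin T)))

/-- Cardinality of the set of elements of `Fin n` with value `< m`, when `m ≤ n`. -/
lemma card_filter_coe_lt {n m : ℕ} (h : m ≤ n) :
    (Finset.univ.filter (fun i : Fin n => (i : ℕ) < m)).card = m := by
  have key : Finset.univ.filter (fun i : Fin n => (i : ℕ) < m)
      = (Finset.range m).attachFin
          (fun x hx => lt_of_lt_of_le (Finset.mem_range.mp hx) h) := by
    ext i
    simp [Finset.mem_attachFin]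
  rw [key, Finset.card_attachFin, Finset.card_range]

/-- A strictly monotone map between `Fin` types satisfies `i ≤ f i`. -/
lemma le_apply_of_strictMono {m n : ℕ} {f : Fin m → Fin n} (hf : StrictMono f) :
    ∀ i : Fin m, (i : ℕ) ≤ (f i : ℕ) := by
  intro i
  obtain ⟨v, hv⟩ : ∃ v, (i : ℕ) = v := ⟨_, rfl⟩
  induction v generalizing i with
  | zero => omega
  | succ j ih =>
    have hjm : j < m := by omega
    have hlt : (⟨j, hjm⟩ : Fin m) < i := by
      simp only [Fin.lt_def]; omega
    have h1 : (f ⟨j, hjm⟩ : ℕ) < (f i : ℕ) := hf hlt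
    have h2 : j ≤ (f ⟨j, hjm⟩ : ℕ) := ih ⟨j, hjm⟩ rfl
    omega

/-- A strictly monotone map between `Fin` types satisfies `f i ≤ i + (n - m)`. -/
lemma apply_le_of_strictMono {m n : ℕ} {f : Fin m → Fin n} (hf : StrictMono f)
    (i : Fin m) : (f i : ℕ) ≤ (i : ℕ) + (n - m) := by
  have hg : StrictMono (fun j : Fin m => (f j.rev).rev) := by
    intro a b hab
    have : b.rev < a.rev := Fin.rev_lt_rev.mpr hab
    exact Fin.rev_lt_rev.mpr (hf this)
  have := le_apply_of_strictMono hg i.rev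
  have hrr : i.rev.rev = i := Fin.rev_rev i
  rw [hrr] at this
  have h1 : (i.rev : ℕ) = m - (i + 1) := Fin.val_rev i
  have h2 : ((f i).rev : ℕ) = n - ((f i : ℕ) + 1) := Fin.val_rev (f i)
  have him : (i : ℕ) < m := i.is_lt
  have hfn : (f i : ℕ) < n := (f i).is_lt
  have hmn : m ≤ n := by
    rcases Nat.eq_zero_or_pos m with hm | hm
    · omega
    · have := le_apply_of_strictMono hf ⟨m - 1, by omega⟩
      simp at this
      omega
  omega

/-- The `i`-th element of a finset of `Fin T` of cardinality `T'` has value at most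
`i + (T - T')`. -/
lemma orderIsoOfFin_le {T T' : ℕ} (I : Finset (Fin T)) (hI : I.card = T')
    (i : Fin T') : ((I.orderIsoOfFin hI i : Fin T) : ℕ) ≤ (i : ℕ) + (T - T') := by
  have h := apply_le_of_strictMono (I.orderEmbOfFin hI).strictMono i
  rw [Finset.coe_orderIsoOfFin_apply]
  exact h

/-- If `ρ̂` is a `d`-delayed prediction with `k` outliers for `S`, then for every `ρ ∈ S`
and every `t ∈ [T]`, the symmetric difference (as multisets) of the first `t` requests of
`ρ` and of `ρ̂` has size at most `4k + 2d`. -/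
theorem stmt2 {T : ℕ} {A : Type*} [DecidableEq A] (d k : ℕ) (ρhat : Fin T → A)
    (S : Set (Fin T → A)) (h : DDelayedKOutliers d k ρhat S) :
    ∀ ρ ∈ S, ∀ t : ℕ, 1 ≤ t → t ≤ T →
      Multiset.card ((prefixMultiset ρ t - prefixMultiset ρhat t) +
        (prefixMultiset ρhat t - prefixMultiset ρ t)) ≤ 4 * k + 2 * d := by
  intro ρ hρ t ht1 htT
  obtain ⟨T', hTk, I, Ihat, hI, hIhat, π, hπ, heq⟩ := h ρ hρ
  have hT'T : T' ≤ T := by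
    rw [← hI]; simpa using I.card_le_univ
  -- the permutation moves indices by at most d
  have hπd : ∀ i : Fin T', (π i : ℕ) ≤ (i : ℕ) + d := by
    intro i
    have := hπ (π i)
    rw [Equiv.symm_apply_apply] at this
    rw [abs_le] at this
    omega
  -- the two embeddings
  set F : Fin T' → Fin T := fun i => (I.orderIsoOfFin hI (π i) : Fin T) with hF
  set G : Fin T' → Fin T := fun i => (Ihat.orderIsoOfFin hIhat i : Fin T) with hG
  have hFinj : Function.Injective F := by
    intro a b hab
    have : (I.orderIsoOfFin hI (π a) : Fin T) = (I.orderIsoOfFin hI (π b) : Fin T) := hab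
    exact π.injective ((I.orderIsoOfFin hI).injective (Subtype.coe_injective this))
  have hGinj : Function.Injective G := by
    intro a b hab
    have : (Ihat.orderIsoOfFin hIhat a : Fin T) = (Ihat.orderIsoOfFin hIhat b : Fin T) := hab
    exact (Ihat.orderIsoOfFin hIhat).injective (Subtype.coe_injective this)
  -- value bounds
  have hFle : ∀ i : Fin T', (F i : ℕ) ≤ (i : ℕ) + d + k := by
    intro i
    have h1 := orderIsoOfFin_le I hI (π i)
    have h2 := hπd i
    have : T - T' ≤ k := by omega
    simp only [hF]
    omega
  have hGle : ∀ i : Fin T', (G i : ℕ) ≤ (i : ℕ) + k := by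
    intro i
    have h1 := orderIsoOfFin_le Ihat hIhat i
    have : T - T' ≤ k := by omega
    simp only [hG]
    omega
  -- the good index set
  set s : Finset (Fin T') :=
    Finset.univ.filter (fun i : Fin T' => (i : ℕ) + (k + d) < t) with hs
  have hscard : t - (k + d) ≤ s.card := by
    have h1 : s = Finset.univ.filter (fun i : Fin T' => (i : ℕ) < t - (k + d)) := by
      ext i; simp only [hs, Finset.mem_filter, Finset.mem_univ, true_and]; omega
    have h2 : t - (k + d) ≤ T' := by omega
    rw [h1, card_filter_coe_lt h2]
  -- common sub-multiset
  set P : Multiset A := prefixMultiset ρ t with hP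
  set Phat : Multiset A := prefixMultiset ρhat t with hPhat
  set M : Multiset A := s.val.map (fun i => ρ (F i)) with hM
  have hMP : M ≤ P := by
    have hsub : s.map ⟨F, hFinj⟩ ⊆ Finset.univ.filter (fun i : Fin T => (i : ℕ) < t) := by
      intro x hx
      simp only [Finset.mem_map, Function.Embedding.coeFn_mk] at hx
      obtain ⟨i, hi, rfl⟩ := hx
      simp only [hs, Finset.mem_filter] at hi
      have := hFle i
      simp only [Finset.mem_filter, Finset.mem_univ, true_and]
      omega
    have hval : (s.map ⟨F, hFinj⟩).val ≤
        (Finset.univ.filter (fun i : Fin T => (i : ℕ) < t)).val :=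
      Finset.val_le_iff.mpr hsub
    have := Multiset.map_le_map (f := ρ) hval
    rw [Finset.map_val, Multiset.map_map] at this
    exact this
  have hMPhat : M ≤ Phat := by
    have hMeq : M = s.val.map (fun i => ρhat (G i)) := by
      apply Multiset.map_congr rfl
      intro i _
      exact heq i
    rw [hMeq]
    have hsub : s.map ⟨G, hGinj⟩ ⊆ Finset.univ.filter (fun i : Fin T => (i : ℕ) < t) := by
      intro x hx
      simp only [Finset.mem_map, Function.Embedding.coeFn_mk] at hx
      obtain ⟨i, hi, rfl⟩ := hx
      simp only [hs, Finset.mem_filter] at hi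
      have := hGle i
      simp only [Finset.mem_filter, Finset.mem_univ, true_and]
      omega
    have hval : (s.map ⟨G, hGinj⟩).val ≤
        (Finset.univ.filter (fun i : Fin T => (i : ℕ) < t)).val :=
      Finset.val_le_iff.mpr hsub
    have := Multiset.map_le_map (f := ρhat) hval
    rw [Finset.map_val, Multiset.map_map] at this
    exact this
  have hMcard : Multiset.card M = s.card := by
    rw [hM, Multiset.card_map]; rfl
  -- cardinalities of prefixes
  have hPcard : Multiset.card P = t := by
    rw [hP]
    show Multiset.card ((Finset.univ.filter (fun i : Fin T => (i : ℕ) < t)).val.map ρ) = t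
    rw [Multiset.card_map]
    exact card_filter_coe_lt htT
  have hPhatcard : Multiset.card Phat = t := by
    rw [hPhat]
    show Multiset.card ((Finset.univ.filter (fun i : Fin T => (i : ℕ) < t)).val.map ρhat) = t
    rw [Multiset.card_map]
    exact card_filter_coe_lt htT
  -- intersection bound
  have hMinter : M ≤ P ∩ Phat := Multiset.le_inter hMP hMPhat
  have hc1 : t - (k + d) ≤ Multiset.card (P ∩ Phat) := by
    have := Multiset.card_le_card hMinter
    omega
  have hc2 : t - (k + d) ≤ Multiset.card (Phat ∩ P) := by
    have : Phat ∩ P = P ∩ Phat := Multiset.inter_comm _ _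
    rw [this]; exact hc1
  -- final arithmetic
  have e1 : Multiset.card (P - Phat) + Multiset.card (P ∩ Phat) = t := by
    rw [← Multiset.card_add, Multiset.sub_add_inter, hPcard]
  have e2 : Multiset.card (Phat - P) + Multiset.card (Phat ∩ P) = t := by
    rw [← Multiset.card_add, Multiset.sub_add_inter, hPhatcard]
  rw [Multiset.card_add]
  omega
end

section
/- In the OuMv reduction for the #s-triangle problem, the Boolean product u^T M v equals 1 if and only if the number of triangles containing the vertex s is positive, where the graph is constructed on vertices {u_1,…,u_n} ∪ {w_1,…,w_n} ∪ {s} with edge {u_i, w_j} present iff M[i][j] = 1, edge {s, u_i} present iff u[i] = 1, and edge {s, w_j} present iff v[j] = 1. More precisely, the number of triangles containing s equals Σ_{i,j ∈ [n]} u[i]·M[i][j]·v[j]. -/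
open scoped Classical

/-- The graph of the OuMv reduction for the `#s-triangle` problem: vertices are
`{u_1,…,u_n} ∪ {w_1,…,w_n} ∪ {s}` (with `s = none`, `u_i = some (inl i)`,
`w_j = some (inr j)`), edge `{u_i, w_j}` present iff `M[i][j] = 1`, edge `{s, u_i}`
present iff `u[i] = 1`, and edge `{s, w_j}` present iff `v[j] = 1`. -/
noncomputable def triGraph {n : ℕ} (M : Fin n → Fin n → Bool) (u v : Fin n → Bool) :
    SimpleGraph (Option (Fin n ⊕ Fin n)) :=
  SimpleGraph.fromRel (fun x y =>
    match x, y with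
    | none, some (Sum.inl i) => u i = true
    | none, some (Sum.inr j) => v j = true
    | some (Sum.inl i), some (Sum.inr j) => M i j = true
    | _, _ => False)

lemma triGraph_adj_none_inl {n : ℕ} (M : Fin n → Fin n → Bool) (u v : Fin n → Bool)
    (i : Fin n) : (triGraph M u v).Adj none (some (Sum.inl i)) ↔ u i = true := by
  simp [triGraph, SimpleGraph.fromRel_adj]

lemma triGraph_adj_none_inr {n : ℕ} (M : Fin n → Fin n → Bool) (u v : Fin n → Bool)
    (j : Fin n) : (triGraph M u v).Adj none (some (Sum.inr j)) ↔ v j = true := by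
  simp [triGraph, SimpleGraph.fromRel_adj]

lemma triGraph_adj_inl_inr {n : ℕ} (M : Fin n → Fin n → Bool) (u v : Fin n → Bool)
    (i j : Fin n) :
    (triGraph M u v).Adj (some (Sum.inl i)) (some (Sum.inr j)) ↔ M i j = true := by
  simp [triGraph, SimpleGraph.fromRel_adj]

lemma triGraph_not_adj_inl_inl {n : ℕ} (M : Fin n → Fin n → Bool) (u v : Fin n → Bool)
    (i j : Fin n) : ¬ (triGraph M u v).Adj (some (Sum.inl i)) (some (Sum.inl j)) := by
  simp [triGraph, SimpleGraph.fromRel_adj]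

lemma triGraph_not_adj_inr_inr {n : ℕ} (M : Fin n → Fin n → Bool) (u v : Fin n → Bool)
    (i j : Fin n) : ¬ (triGraph M u v).Adj (some (Sum.inr i)) (some (Sum.inr j)) := by
  simp [triGraph, SimpleGraph.fromRel_adj]

lemma triGraph_mem_iff {n : ℕ} (M : Fin n → Fin n → Bool) (u v : Fin n → Bool)
    (t : Finset (Option (Fin n ⊕ Fin n))) :
    (t ∈ ((triGraph M u v).cliqueFinset 3).filter
        (fun t => (none : Option (Fin n ⊕ Fin n)) ∈ t)) ↔
    ∃ i j, u i = true ∧ M i j = true ∧ v j = true ∧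
      t = {none, some (Sum.inl i), some (Sum.inr j)} := by
  constructor
  · intro ht
    rw [Finset.mem_filter, SimpleGraph.mem_cliqueFinset_iff] at ht
    obtain ⟨hcl, hn⟩ := ht
    have hcard : (t.erase none).card = 2 := by
      rw [Finset.card_erase_of_mem hn, hcl.card_eq]
    obtain ⟨a, b, hab, he⟩ := Finset.card_eq_two.mp hcard
    have ha : a ∈ t.erase none := he ▸ Finset.mem_insert_self _ _
    have hb : b ∈ t.erase none := he ▸ Finset.mem_insert_of_mem (Finset.mem_singleton_self _)
    have ha' : a ≠ none := Finset.ne_of_mem_erase ha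
    have hb' : b ≠ none := Finset.ne_of_mem_erase hb
    have hat : a ∈ t := Finset.mem_of_mem_erase ha
    have hbt : b ∈ t := Finset.mem_of_mem_erase hb
    have hadj_na : (triGraph M u v).Adj none a := hcl.1 hn hat (Ne.symm ha')
    have hadj_nb : (triGraph M u v).Adj none b := hcl.1 hn hbt (Ne.symm hb')
    have hadj_ab : (triGraph M u v).Adj a b := hcl.1 hat hbt hab
    have ht : t = {none, a, b} := by
      rw [show ({none, a, b} : Finset _) = insert none (t.erase none) by rw [he],
        Finset.insert_erase hn]
    match a, b with
    | none, _ => exact absurd rfl ha'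
    | _, none => exact absurd rfl hb'
    | some (Sum.inl i), some (Sum.inl i') =>
        exact absurd hadj_ab (triGraph_not_adj_inl_inl M u v i i')
    | some (Sum.inr j), some (Sum.inr j') =>
        exact absurd hadj_ab (triGraph_not_adj_inr_inr M u v j j')
    | some (Sum.inl i), some (Sum.inr j) =>
        exact ⟨i, j, (triGraph_adj_none_inl M u v i).mp hadj_na,
          (triGraph_adj_inl_inr M u v i j).mp hadj_ab,
          (triGraph_adj_none_inr M u v j).mp hadj_nb, ht⟩
    | some (Sum.inr j), some (Sum.inl i) =>
        exact ⟨i, j, (triGraph_adj_none_inl M u v i).mp hadj_nb,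
          (triGraph_adj_inl_inr M u v i j).mp hadj_ab.symm,
          (triGraph_adj_none_inr M u v j).mp hadj_na, by
            rw [ht]; congr 1; exact Finset.pair_comm _ _⟩
  · rintro ⟨i, j, hu, hM, hv, rfl⟩
    rw [Finset.mem_filter, SimpleGraph.mem_cliqueFinset_iff]
    refine ⟨?_, by simp⟩
    rw [SimpleGraph.is3Clique_triple_iff]
    exact ⟨(triGraph_adj_none_inl M u v i).mpr hu,
      (triGraph_adj_none_inr M u v j).mpr hv,
      (triGraph_adj_inl_inr M u v i j).mpr hM⟩

/-- In the OuMv reduction for the `#s-triangle` problem, the number of triangles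
containing the vertex `s` equals `Σ_{i,j} u[i]·M[i][j]·v[j]`; consequently the Boolean
product `uᵀ M v` equals `1` iff the number of triangles containing `s` is positive. -/
theorem stmt10 {n : ℕ} (M : Fin n → Fin n → Bool) (u v : Fin n → Bool) :
    ((((triGraph M u v).cliqueFinset 3).filter
        (fun t => (none : Option (Fin n ⊕ Fin n)) ∈ t)).card
      = ∑ i : Fin n, ∑ j : Fin n,
          (if u i then 1 else 0) * (if M i j then 1 else 0) * (if v j then 1 else 0)) ∧
    ((∃ i j, u i = true ∧ M i j = true ∧ v j = true) ↔
      0 < (((triGraph M u v).cliqueFinset 3).filter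
        (fun t => (none : Option (Fin n ⊕ Fin n)) ∈ t)).card) := by
  constructor
  · have himg : (((triGraph M u v).cliqueFinset 3).filter
        (fun t => (none : Option (Fin n ⊕ Fin n)) ∈ t))
        = (Finset.univ.filter (fun p : Fin n × Fin n =>
            u p.1 = true ∧ M p.1 p.2 = true ∧ v p.2 = true)).image
          (fun p => ({none, some (Sum.inl p.1), some (Sum.inr p.2)} :
            Finset (Option (Fin n ⊕ Fin n)))) := by
      ext t
      rw [triGraph_mem_iff, Finset.mem_image]
      constructor
      · rintro ⟨i, j, hu, hM, hv, rfl⟩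
        exact ⟨(i, j), by simp [hu, hM, hv]⟩
      · rintro ⟨⟨i, j⟩, hp, rfl⟩
        simp only [Finset.mem_filter] at hp
        exact ⟨i, j, hp.2.1, hp.2.2.1, hp.2.2.2, rfl⟩
    rw [himg, Finset.card_image_of_injOn, Finset.card_filter, Fintype.sum_prod_type]
    · refine Finset.sum_congr rfl fun i _ => Finset.sum_congr rfl fun j _ => ?_
      by_cases h1 : u i = true <;> by_cases h2 : M i j = true <;>
        by_cases h3 : v j = true <;> simp [h1, h2, h3]
    · rintro ⟨i, j⟩ _ ⟨i', j'⟩ _ h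
      dsimp only at h
      have h1 : (some (Sum.inl i) : Option (Fin n ⊕ Fin n)) ∈
          ({none, some (Sum.inl i'), some (Sum.inr j')} :
            Finset (Option (Fin n ⊕ Fin n))) := by rw [← h]; simp
      have h2 : (some (Sum.inr j) : Option (Fin n ⊕ Fin n)) ∈
          ({none, some (Sum.inl i'), some (Sum.inr j')} :
            Finset (Option (Fin n ⊕ Fin n))) := by rw [← h]; simp
      simp only [Finset.mem_insert, Finset.mem_singleton] at h1 h2
      rcases h1 with h1 | h1 | h1 <;> rcases h2 with h2 | h2 | h2 <;>
        simp_all [Prod.ext_iff]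
  · rw [Finset.card_pos]
    constructor
    · rintro ⟨i, j, hu, hM, hv⟩
      exact ⟨_, (triGraph_mem_iff M u v _).mpr ⟨i, j, hu, hM, hv, rfl⟩⟩
    · rintro ⟨t, ht⟩
      obtain ⟨i, j, hu, hM, hv, _⟩ := (triGraph_mem_iff M u v t).mp ht
      exact ⟨i, j, hu, hM, hv⟩
end

section
/- Combining the block-position and block-size bounds: if every request's j-th occurrence in ρ* is within ⌈C/M(x)⌉ blocks after its predicted block, each block of the predicted sequence ρ̂ has exactly size u+q, and the first k blocks of ρ* have total length in (k(u+q) − C·u, k(u+q)], then for every request x and occurrence index j, |pos(x, j, ρ̂) − pos(x, j, ρ*)| ≤ (C+1)(u+q), i.e., ρ̂ is a (C+1)(u+q)-delayed prediction for ρ*. -/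
/-- Combining the block-position and block-size bounds of the locally-reducible lower
bound.  Fix a request with multiplicity `m ≥ 1` per universal block and an occurrence
index `j ≥ 1`.  In the predicted sequence `ρ̂` (made of identical blocks of size `u + q`)
the `j`-th occurrence sits at a position `posHat` in its predicted block `⌈j/m⌉`, i.e.
`(⌈j/m⌉ − 1)(u+q) < posHat ≤ ⌈j/m⌉(u+q)`.  In the constructed sequence `ρ*` the `j`-th
occurrence lies in a block `b` with `⌈j/m⌉ ≤ b ≤ ⌈j/m⌉ + ⌈C/m⌉ − 1`, and `L k`, the
length of the first `k` blocks of `ρ*`, satisfies `k(u+q) − C·u < L k ≤ k(u+q)`, so its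
position `posStar` satisfies `L (b−1) < posStar ≤ L b`.  Then
`|posHat − posStar| ≤ (C+1)(u+q)`, i.e. `ρ̂` is a `(C+1)(u+q)`-delayed prediction for
`ρ*`.  (Here `⌈a/b⌉` is written `(a + b − 1)/b`.) -/
theorem stmt13 (u q C m n₃ j b posHat posStar : ℕ) (L : ℕ → ℕ)
    (hm : 1 ≤ m) (hC : 1 ≤ C) (hj : 1 ≤ j)
    (hL : ∀ k, k * (u + q) < L k + C * u ∧ L k ≤ k * (u + q))
    (hposHat : ((j + m - 1) / m - 1) * (u + q) < posHat ∧
      posHat ≤ ((j + m - 1) / m) * (u + q))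
    (hb : (j + m - 1) / m ≤ b ∧ b ≤ (j + m - 1) / m + (C + m - 1) / m - 1)
    (hposStar : L (b - 1) < posStar ∧ posStar ≤ L b) :
    |(posHat : ℤ) - (posStar : ℤ)| ≤ ((C : ℤ) + 1) * ((u : ℤ) + (q : ℤ)) := by
  obtain ⟨hLb1, hLb2⟩ := hL b
  obtain ⟨hLb1', hLb2'⟩ := hL (b - 1)
  set p := (j + m - 1) / m with hp
  have hp1 : 1 ≤ p := (Nat.one_le_div_iff (by omega)).mpr (by omega)
  have hCm : (C + m - 1) / m ≤ C := by
    have h := (Nat.div_lt_iff_lt_mul (show 0 < m by omega)).mpr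
      (show C + m - 1 < (C + 1) * m by
        zify [show 1 ≤ C + m by omega]; nlinarith)
    omega
  have hbp : p ≤ b := hb.1
  have hb2 : b ≤ p + C - 1 := by omega
  have hb1 : 1 ≤ b := le_trans hp1 hbp
  clear hp hb hCm
  clear_value p
  rw [abs_le]
  have h1 : (posHat : ℤ) ≤ p * (u + q) := by exact_mod_cast hposHat.2
  have h2 : ((p : ℤ) - 1) * (u + q) < posHat := by
    have := hposHat.1
    zify [hp1] at this
    linarith
  have h3 : ((b : ℤ) - 1) * (u + q) < L (b - 1) + C * u := by
    have := hLb1'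
    zify [hb1] at this
    linarith
  have h4 : (L b : ℤ) ≤ b * (u + q) := by exact_mod_cast hLb2
  have h5 : (L (b - 1) : ℤ) < posStar := by exact_mod_cast hposStar.1
  have h6 : (posStar : ℤ) ≤ L b := by exact_mod_cast hposStar.2
  have hbZ : (b : ℤ) ≤ (p : ℤ) + C - 1 := by
    have := hb2; omega
  have hpb : (p : ℤ) ≤ b := by exact_mod_cast hbp
  have huq : (0:ℤ) ≤ (u:ℤ) + q := by positivity
  have hA : (b:ℤ) * ((u:ℤ)+q) ≤ ((p:ℤ)+C-1) * ((u:ℤ)+q) :=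
    mul_le_mul_of_nonneg_right hbZ huq
  have hB : ((p:ℤ)-1) * ((u:ℤ)+q) ≤ ((b:ℤ)-1) * ((u:ℤ)+q) :=
    mul_le_mul_of_nonneg_right (by linarith) huq
  have hD : ((p:ℤ)+C-1) * ((u:ℤ)+q) - ((p:ℤ)-1) * ((u:ℤ)+q) = C * ((u:ℤ)+q) := by ring
  have hF : (p:ℤ) * ((u:ℤ)+q) - ((p:ℤ)-1) * ((u:ℤ)+q) = (u:ℤ)+q := by ring
  have hCq : (0:ℤ) ≤ (C:ℤ) * q := by positivity
  have hH : ((C:ℤ)+1) * ((u:ℤ)+q) = (C:ℤ)*u + (C:ℤ)*q + u + q := by ring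
  have hI : (C:ℤ) * ((u:ℤ)+q) = (C:ℤ)*u + (C:ℤ)*q := by ring
  have hG : (u:ℤ) + q + C * u ≤ ((C:ℤ)+1) * ((u:ℤ)+q) := by linarith
  have hE : (C:ℤ) * ((u:ℤ)+q) ≤ ((C:ℤ)+1) * ((u:ℤ)+q) := by linarith
  constructor
  · linarith
  · linarith
end

section
/- Let G be a directed graph with edge set E = P ∪ F, and let u, v be vertices. Let V(F) be the set of endpoints of edges in F. Define H to be the directed graph on vertex set V(F) ∪ {u, v} with an edge (a, b) whenever (a, b) ∈ E with a, b ∈ V(F) ∪ {u, v}, or b is reachable from a using only edges of P. Then v is reachable from u in G if and only if v is reachable from u in H. -/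
/-!
Contracting every maximal `P`-segment of an `E`-path to a single shortcut edge gives a path
whose vertices all lie in `S`, as long as `S` contains both ends and every non-`P` edge has its
endpoints in `S`. Conversely, a shortcut edge is either an `E`-edge or a `P`-path, hence an
`E`-path.
-/

namespace Relation

variable {α : Type*} {E P : α → α → Prop} {S : Set α} {u v x : α}

def shortcut (E P : α → α → Prop) (S : Set α) : α → α → Prop :=
  fun a b => a ∈ S ∧ b ∈ S ∧ (E a b ∨ ReflTransGen P a b)

theorem ReflTransGen.of_shortcut (hPE : ∀ a b, P a b → E a b)
    (h : ReflTransGen (shortcut E P S) u v) : ReflTransGen E u v :=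
  reflTransGen_closed (fun _ _ hab => hab.2.2.elim .single (ReflTransGen.mono hPE _ _)) u v h

theorem ReflTransGen.exists_shortcut_of_mem (hES : ∀ a b, E a b → ¬ P a b → a ∈ S ∧ b ∈ S)
    (hu : u ∈ S) (h : ReflTransGen E u x) :
    ∃ y ∈ S, ReflTransGen (shortcut E P S) u y ∧ ReflTransGen P y x := by
  induction h with
  | refl => exact ⟨u, hu, .refl, .refl⟩
  | @tail b c _ hbc ih =>
    obtain ⟨y, hyS, huy, hyb⟩ := ih
    by_cases hP : P b c
    · exact ⟨y, hyS, huy, hyb.tail hP⟩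
    · obtain ⟨hbS, hcS⟩ := hES b c hbc hP
      exact ⟨c, hcS, (huy.tail ⟨hyS, hbS, .inr hyb⟩).tail ⟨hbS, hcS, .inl hbc⟩, .refl⟩

theorem reflTransGen_shortcut_iff (hPE : ∀ a b, P a b → E a b)
    (hES : ∀ a b, E a b → ¬ P a b → a ∈ S ∧ b ∈ S) (hu : u ∈ S) (hv : v ∈ S) :
    ReflTransGen (shortcut E P S) u v ↔ ReflTransGen E u v := by
  refine ⟨ReflTransGen.of_shortcut hPE, fun h => ?_⟩
  obtain ⟨y, hyS, huy, hyv⟩ := h.exists_shortcut_of_mem hES hu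
  exact huy.tail ⟨hyS, hv, .inr hyv⟩

end Relation

/-- Let `G` be a directed graph with edge relation `E = P ∪ F` (where `P` is the set of
'permanent' edges and `F = E \ P`), and let `u, v` be vertices.  Let `V(F)` be the set of
endpoints of edges in `F`.  Let `H` be the directed graph on the vertices
`V(F) ∪ {u, v}` with an edge `(a, b)` whenever `(a, b) ∈ E`, or `b` is reachable from `a`
using only edges of `P`.  Then `v` is reachable from `u` in `G` iff `v` is reachable from
`u` in `H`. -/
theorem stmt15 {V : Type*} (E P F : V → V → Prop) (u v : V)
    (hPE : ∀ a b, P a b → E a b)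
    (hF : ∀ a b, F a b ↔ E a b ∧ ¬ P a b) :
    Relation.ReflTransGen E u v ↔
      Relation.ReflTransGen (fun a b =>
        a ∈ ({w | ∃ z, F w z ∨ F z w} : Set V) ∪ {u, v} ∧
        b ∈ ({w | ∃ z, F w z ∨ F z w} : Set V) ∪ {u, v} ∧
        (E a b ∨ Relation.ReflTransGen P a b)) u v := by
  have hES : ∀ a b, E a b → ¬ P a b →
      a ∈ ({w | ∃ z, F w z ∨ F z w} : Set V) ∪ {u, v} ∧
        b ∈ ({w | ∃ z, F w z ∨ F z w} : Set V) ∪ {u, v} := fun a b hE hP =>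
    have hFab := (hF a b).mpr ⟨hE, hP⟩
    ⟨.inl ⟨b, .inl hFab⟩, .inl ⟨a, .inr hFab⟩⟩
  exact (Relation.reflTransGen_shortcut_iff hPE hES (.inr (.inl rfl)) (.inr (.inr rfl))).symm
end
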